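/- Let y be a finitely supported probability vector, and let x be a finitely supported probability vector such that there exists an infinite probability vector z ∈ ℓ¹ with x ⊗ z ≺ y ⊗ z (infinite-dimensional catalysis). Then x lies in the ℓ¹-closure of the set of finitely supported probability vectors x' for which there exists a finitely supported catalyst z' with x' ⊗ z' ≺ y ⊗ z'. -/

import Mathlib

open scoped BigOperators

noncomputable def kMaxSum {ι : Type*} (f : ι → ℝ) (k : ℕ) : ℝ :=
  sSup {t : ℝ | ∃ A : Finset ι, A.card = k ∧ ∑ i ∈ A, f i = t}

def Submaj {ι κ : Type*} (f : ι → ℝ) (g : κ → ℝ) : Prop :=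
  ∀ k : ℕ, kMaxSum f k ≤ kMaxSum g k

def MajT {ι κ : Type*} (f : ι → ℝ) (g : κ → ℝ) : Prop :=
  (∑' i, f i = ∑' j, g j) ∧ Submaj f g

def tensor {ι κ : Type*} (f : ι → ℝ) (g : κ → ℝ) : ι × κ → ℝ :=
  fun p => f p.1 * g p.2

def IsFinProbVec (f : ℕ → ℝ) : Prop :=
  (∀ i, 0 ≤ f i) ∧ (Function.support f).Finite ∧ ∑' i, f i = 1

/-!
Cut the catalyst `z` off after `n` entries and renormalise it to `z'`. Since `x ⊗ z ≺ y ⊗ z`,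
every top-`k` sum of `x ⊗ z'` exceeds the corresponding one of `y ⊗ z'` by at most
`(∑ j < n, z j)⁻¹ - 1`, which tends to `0`. To absorb this defect, mix `x` with weight `c` with the
uniform distribution on `N` points; this moves `x` by at most `2c` in ℓ¹. For `1 ≤ k ≤ #S`, `S` the
support of `y ⊗ z'`, the mixture loses `c` times the top-`k` sum of `y ⊗ z'`, which is at least
`c` times a fixed positive entry `m` of `y ⊗ z` (as `z' ≥ z` on the first `n` entries), and gains
at most `c k / N ≤ c m / 2`. For `k > #S` the top-`k` sum of `y ⊗ z'` is its total mass `1`.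
-/

open Finset Filter Topology

lemma summable_of_tsum_ne_zero {ι α : Type*} [AddCommMonoid α] [TopologicalSpace α] {f : ι → α}
    (h : ∑' i, f i ≠ 0) : Summable f :=
  by_contra fun hf => h (tsum_eq_zero_of_not_summable hf)

lemma exists_pos_of_tsum_pos {ι : Type*} {f : ι → ℝ} (hf0 : 0 ≤ f) (h : 0 < ∑' i, f i) :
    ∃ i, 0 < f i := by
  by_contra! hf
  simp [le_antisymm hf hf0] at h

lemma exists_nat_pos_mul_inv_le (a : ℝ) {b : ℝ} (hb : 0 < b) :
    ∃ N : ℕ, 0 < N ∧ a * (N : ℝ)⁻¹ ≤ b := by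
  obtain ⟨N, hN⟩ := exists_nat_gt (max a 0 / b)
  have hN0 : (0 : ℝ) < N := (div_nonneg (le_max_right a 0) hb.le).trans_lt hN
  refine ⟨N, Nat.cast_pos.1 hN0, ?_⟩
  rw [← div_eq_mul_inv, div_le_iff₀ hN0]
  rw [div_lt_iff₀ hb] at hN
  linarith [le_max_left a 0]

section KMaxSum

variable {ι : Type*} {f g : ι → ℝ} {k : ℕ}

lemma sum_le_kMaxSum (hf0 : 0 ≤ f) (hf : Summable f) {A : Finset ι} (hA : #A = k) :
    ∑ i ∈ A, f i ≤ kMaxSum f k :=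
  le_csSup ⟨∑' i, f i, by rintro _ ⟨B, -, rfl⟩; exact hf.sum_le_tsum B fun i _ => hf0 i⟩
    ⟨A, hA, rfl⟩

lemma kMaxSum_zero (f : ι → ℝ) : kMaxSum f 0 = 0 := by
  simp [kMaxSum, eq_comm]

variable [Infinite ι]

lemma le_kMaxSum (hf0 : 0 ≤ f) (hf : Summable f) (hk : 1 ≤ k) (i : ι) : f i ≤ kMaxSum f k := by
  obtain ⟨A, hiA, hA⟩ := Infinite.exists_superset_card_eq {i} k (by simpa using hk)
  exact (single_le_sum (fun j _ => hf0 j) (hiA (mem_singleton_self i))).trans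
    (sum_le_kMaxSum hf0 hf hA)

lemma kMaxSum_le {C : ℝ} (h : ∀ A : Finset ι, #A = k → ∑ i ∈ A, f i ≤ C) : kMaxSum f k ≤ C := by
  obtain ⟨A, hA⟩ := Infinite.exists_subset_card_eq ι k
  refine csSup_le ⟨_, A, hA, rfl⟩ ?_
  rintro _ ⟨B, hB, rfl⟩
  exact h B hB

lemma kMaxSum_le_tsum (hf0 : 0 ≤ f) (hf : Summable f) : kMaxSum f k ≤ ∑' i, f i :=
  kMaxSum_le fun A _ => hf.sum_le_tsum A fun i _ => hf0 i

lemma kMaxSum_eq_tsum (hf0 : 0 ≤ f) (hf : Summable f) {S : Finset ι}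
    (hS : ∀ i, f i ≠ 0 → i ∈ S) (hk : #S ≤ k) : kMaxSum f k = ∑' i, f i := by
  refine (kMaxSum_le_tsum hf0 hf).antisymm ?_
  obtain ⟨A, hSA, hA⟩ := Infinite.exists_superset_card_eq S k hk
  rw [tsum_eq_sum fun i hi => by_contra fun h => hi (hSA (hS i h))]
  exact sum_le_kMaxSum hf0 hf hA

lemma kMaxSum_mono (hfg : f ≤ g) (hg0 : 0 ≤ g) (hg : Summable g) :
    kMaxSum f k ≤ kMaxSum g k :=
  kMaxSum_le fun _ hA => (sum_le_sum fun i _ => hfg i).trans (sum_le_kMaxSum hg0 hg hA)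

lemma kMaxSum_add_le (hf0 : 0 ≤ f) (hf : Summable f) (hg0 : 0 ≤ g) (hg : Summable g) :
    kMaxSum (f + g) k ≤ kMaxSum f k + kMaxSum g k :=
  kMaxSum_le fun A hA => by
    simpa only [Pi.add_apply, sum_add_distrib] using
      add_le_add (sum_le_kMaxSum hf0 hf hA) (sum_le_kMaxSum hg0 hg hA)

lemma kMaxSum_smul_le {a : ℝ} (ha : 0 ≤ a) (hf0 : 0 ≤ f) (hf : Summable f) :
    kMaxSum (a • f) k ≤ a * kMaxSum f k :=
  kMaxSum_le fun A hA => by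
    simpa only [Pi.smul_apply, smul_eq_mul, ← mul_sum] using
      mul_le_mul_of_nonneg_left (sum_le_kMaxSum hf0 hf hA) ha

lemma kMaxSum_le_mul {β : ℝ} (hf : ∀ i, f i ≤ β) : kMaxSum f k ≤ k * β :=
  kMaxSum_le fun A hA => by
    simpa [hA] using sum_le_card_nsmul A f β fun i _ => hf i

end KMaxSum

lemma submaj_convexComb_of_kMaxSum_le_add {ι : Type*} [Infinite ι] {f g h : ι → ℝ}
    {S : Finset ι} {c m β : ℝ} {i₀ : ι}
    (hf0 : 0 ≤ f) (hf : Summable f) (hg0 : 0 ≤ g) (hg : Summable g) (hh0 : 0 ≤ h)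
    (hh : Summable h) (hfg : ∑' i, f i ≤ ∑' i, g i) (hhg : ∑' i, h i ≤ ∑' i, g i)
    (hgS : ∀ i, g i ≠ 0 → i ∈ S) (hc0 : 0 ≤ c) (hc1 : c ≤ 1) (hm : m ≤ g i₀)
    (hβ : ∀ i, h i ≤ β) (hSβ : #S * β ≤ m / 2)
    (hfg_approx : ∀ k, kMaxSum f k ≤ kMaxSum g k + c * m / 2) :
    Submaj ((1 - c) • f + c • h) g := by
  have hc1' : 0 ≤ 1 - c := sub_nonneg.2 hc1
  have hβ0 : 0 ≤ β := (hh0 i₀).trans (hβ i₀)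
  intro k
  rcases lt_or_ge #S k with hSk | hkS
  · rw [kMaxSum_eq_tsum hg0 hg hgS hSk.le]
    refine (kMaxSum_le_tsum (add_nonneg (smul_nonneg hc1' hf0) (smul_nonneg hc0 hh0))
      ((hf.const_smul (1 - c)).add (hh.const_smul c))).trans ?_
    simp only [Pi.add_apply, Pi.smul_apply, smul_eq_mul]
    rw [(hf.mul_left _).tsum_add (hh.mul_left _), tsum_mul_left, tsum_mul_left]
    linarith [mul_le_mul_of_nonneg_left hfg hc1', mul_le_mul_of_nonneg_left hhg hc0]
  rcases Nat.eq_zero_or_pos k with rfl | hk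
  · simp [kMaxSum_zero]
  have hmg : m ≤ kMaxSum g k := hm.trans (le_kMaxSum hg0 hg hk i₀)
  have hm0 : 0 ≤ m := by linarith [mul_nonneg (Nat.cast_nonneg (α := ℝ) #S) hβ0]
  have hhk : kMaxSum h k ≤ m / 2 :=
    (kMaxSum_le_mul hβ).trans (le_trans (by gcongr) hSβ)
  calc kMaxSum ((1 - c) • f + c • h) k
      ≤ kMaxSum ((1 - c) • f) k + kMaxSum (c • h) k :=
        kMaxSum_add_le (smul_nonneg hc1' hf0) (hf.const_smul (1 - c)) (smul_nonneg hc0 hh0)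
          (hh.const_smul c)
    _ ≤ (1 - c) * kMaxSum f k + c * kMaxSum h k :=
        add_le_add (kMaxSum_smul_le hc1' hf0 hf) (kMaxSum_smul_le hc0 hh0 hh)
    _ ≤ (1 - c) * (kMaxSum g k + c * m / 2) + c * (m / 2) := by
        gcongr
        exact hfg_approx k
    _ ≤ kMaxSum g k := by
        nlinarith [mul_le_mul_of_nonneg_left hmg hc0, mul_nonneg (mul_nonneg hc0 hc0) hm0]

section Tensor

variable {ι κ : Type*} {x y : ι → ℝ} {z w : κ → ℝ}

lemma tensor_nonneg (hx : 0 ≤ x) (hz : 0 ≤ z) : 0 ≤ tensor x z :=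
  fun p => mul_nonneg (hx p.1) (hz p.2)

lemma summable_tensor (hx0 : 0 ≤ x) (hz0 : 0 ≤ z) (hx : Summable x) (hz : Summable z) :
    Summable (tensor x z) :=
  hx.mul_of_nonneg hz hx0 hz0

lemma tsum_tensor (hx0 : 0 ≤ x) (hz0 : 0 ≤ z) (hx : Summable x) (hz : Summable z) :
    ∑' p, tensor x z p = (∑' i, x i) * ∑' j, z j :=
  (hx.tsum_mul_tsum hz (summable_tensor hx0 hz0 hx hz)).symm

lemma tensor_ne_zero {p : ι × κ} : tensor x z p ≠ 0 ↔ x p.1 ≠ 0 ∧ z p.2 ≠ 0 :=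
  mul_ne_zero_iff

lemma tensor_add_left : tensor (x + y) z = tensor x z + tensor y z := by
  ext p; exact add_mul _ _ _

lemma tensor_smul_left (a : ℝ) : tensor (a • x) z = a • tensor x z := by
  ext p; exact mul_assoc _ _ _

lemma tensor_smul_right (a : ℝ) : tensor x (a • z) = a • tensor x z := by
  ext p; exact mul_left_comm _ _ _

lemma tensor_sub_right : tensor x (z - w) = tensor x z - tensor x w := by
  ext p; exact mul_sub _ _ _

lemma tensor_mono_right (hx : 0 ≤ x) (hwz : w ≤ z) : tensor x w ≤ tensor x z :=
  fun p => mul_le_mul_of_nonneg_left (hwz p.2) (hx p.1)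

lemma Submaj.kMaxSum_tensor_smul_le [Infinite (ι × κ)] (hxz : Submaj (tensor x z) (tensor y z))
    (hx0 : 0 ≤ x) (hx : Summable x) (hy0 : 0 ≤ y) (hy : Summable y) (hw0 : 0 ≤ w) (hwz : w ≤ z)
    (hz : Summable z) {s : ℝ} (hs : 0 < s) (k : ℕ) :
    kMaxSum (tensor x (s⁻¹ • w)) k ≤
      kMaxSum (tensor y (s⁻¹ • w)) k + s⁻¹ * ((∑' i, y i) * ∑' j, (z - w) j) := by
  have hw : Summable w := hz.of_nonneg_of_le hw0 hwz
  have hzw0 : 0 ≤ z - w := sub_nonneg.2 hwz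
  have hsw0 : 0 ≤ s⁻¹ • w := smul_nonneg (inv_nonneg.2 hs.le) hw0
  have hy_split : tensor y z = s • tensor y (s⁻¹ • w) + tensor y (z - w) := by
    rw [tensor_smul_right, smul_smul, mul_inv_cancel₀ hs.ne', one_smul, tensor_sub_right,
      add_sub_cancel]
  have hyz : kMaxSum (tensor y z) k ≤
      s * kMaxSum (tensor y (s⁻¹ • w)) k + (∑' i, y i) * ∑' j, (z - w) j := by
    rw [hy_split, ← tsum_tensor hy0 hzw0 hy (hz.sub hw)]
    refine (kMaxSum_add_le (smul_nonneg hs.le (tensor_nonneg hy0 hsw0))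
      ((summable_tensor hy0 hsw0 hy (hw.const_smul s⁻¹)).const_smul s) (tensor_nonneg hy0 hzw0)
      (summable_tensor hy0 hzw0 hy (hz.sub hw))).trans (add_le_add ?_ ?_)
    · exact kMaxSum_smul_le hs.le (tensor_nonneg hy0 hsw0)
        (summable_tensor hy0 hsw0 hy (hw.const_smul s⁻¹))
    · exact kMaxSum_le_tsum (tensor_nonneg hy0 hzw0) (summable_tensor hy0 hzw0 hy (hz.sub hw))
  calc kMaxSum (tensor x (s⁻¹ • w)) k ≤ s⁻¹ * kMaxSum (tensor x w) k := by
        rw [tensor_smul_right]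
        exact kMaxSum_smul_le (inv_nonneg.2 hs.le) (tensor_nonneg hx0 hw0)
          (summable_tensor hx0 hw0 hx hw)
    _ ≤ s⁻¹ * kMaxSum (tensor y z) k := by
        gcongr
        exact (kMaxSum_mono (tensor_mono_right hx0 hwz) (tensor_nonneg hx0 (hw0.trans hwz))
          (summable_tensor hx0 (hw0.trans hwz) hx hz)).trans (hxz k)
    _ ≤ s⁻¹ * (s * kMaxSum (tensor y (s⁻¹ • w)) k + (∑' i, y i) * ∑' j, (z - w) j) := by
        gcongr
    _ = _ := by rw [mul_add, inv_mul_cancel_left₀ hs.ne']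

end Tensor

namespace IsFinProbVec

variable {x u z : ℕ → ℝ}

lemma summable (hx : IsFinProbVec x) : Summable x :=
  summable_of_ne_finset_zero (s := hx.2.1.toFinset) fun i hi => by simpa using hi

lemma le_one (hx : IsFinProbVec x) (i : ℕ) : x i ≤ 1 :=
  hx.2.2 ▸ hx.summable.le_tsum i fun j _ => hx.1 j

lemma exists_pos (hx : IsFinProbVec x) : ∃ i, 0 < x i :=
  exists_pos_of_tsum_pos hx.1 (hx.2.2 ▸ one_pos)

lemma tsum_tensor (hx : IsFinProbVec x) (hz : IsFinProbVec z) : ∑' p, tensor x z p = 1 := by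
  rw [_root_.tsum_tensor hx.1 hz.1 hx.summable hz.summable, hx.2.2, hz.2.2, one_mul]

lemma convexComb (hx : IsFinProbVec x) (hu : IsFinProbVec u) {c : ℝ} (hc0 : 0 ≤ c)
    (hc1 : c ≤ 1) : IsFinProbVec ((1 - c) • x + c • u) := by
  refine ⟨fun i => add_nonneg (mul_nonneg (sub_nonneg.2 hc1) (hx.1 i)) (mul_nonneg hc0 (hu.1 i)),
    (hx.2.1.union hu.2.1).subset ((Function.support_add _ _).trans (Set.union_subset_union
      (Function.support_const_smul_subset _ _) (Function.support_const_smul_subset _ _))), ?_⟩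
  simp only [Pi.add_apply, Pi.smul_apply, smul_eq_mul]
  rw [(hx.summable.mul_left _).tsum_add (hu.summable.mul_left _), tsum_mul_left, tsum_mul_left,
    hx.2.2, hu.2.2]
  ring

lemma tsum_abs_sub_convexComb_le (hx : IsFinProbVec x) (hu : IsFinProbVec u) {c : ℝ}
    (hc0 : 0 ≤ c) : ∑' i, |x i - ((1 - c) • x + c • u) i| ≤ 2 * c := by
  have hdiff : ∀ i, |x i - ((1 - c) • x + c • u) i| = c * |x i - u i| := fun i => by
    simp only [Pi.add_apply, Pi.smul_apply, smul_eq_mul]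
    rw [← abs_of_nonneg hc0, ← abs_mul, abs_of_nonneg hc0]
    ring_nf
  have hle : ∀ i, |x i - u i| ≤ x i + u i := fun i =>
    abs_sub_le_iff.2 ⟨by linarith [hu.1 i], by linarith [hx.1 i]⟩
  calc ∑' i, |x i - ((1 - c) • x + c • u) i| = c * ∑' i, |x i - u i| := by
        rw [tsum_congr hdiff, tsum_mul_left]
    _ ≤ c * ∑' i, (x i + u i) := mul_le_mul_of_nonneg_left
        ((hx.summable.sub hu.summable).abs.tsum_le_tsum hle (hx.summable.add hu.summable)) hc0
    _ = 2 * c := by rw [hx.summable.tsum_add hu.summable, hx.2.2, hu.2.2]; ring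

end IsFinProbVec

noncomputable def truncNormalize (z : ℕ → ℝ) (n : ℕ) : ℕ → ℝ :=
  (∑ j ∈ range n, z j)⁻¹ • (↑(range n) : Set ℕ).indicator z

section TruncNormalize

variable {z : ℕ → ℝ} {n : ℕ}

lemma tsum_indicator_range : ∑' j, (↑(range n) : Set ℕ).indicator z j = ∑ j ∈ range n, z j :=
  (_root_.tsum_subtype _ z).symm.trans (Finset.tsum_subtype _ z)

lemma truncNormalize_of_le {j : ℕ} (hj : n ≤ j) : truncNormalize z n j = 0 := by
  simp [truncNormalize, hj]

lemma isFinProbVec_truncNormalize (hz0 : 0 ≤ z) (hn : 0 < ∑ j ∈ range n, z j) :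
    IsFinProbVec (truncNormalize z n) := by
  refine ⟨fun j => mul_nonneg (inv_nonneg.2 hn.le) (Set.indicator_nonneg (fun j _ => hz0 j) j),
    (range n).finite_toSet.subset fun j hj => ?_, ?_⟩
  · by_contra h
    exact hj (truncNormalize_of_le (by simpa using h))
  · simp only [truncNormalize, Pi.smul_apply, smul_eq_mul]
    rw [tsum_mul_left, tsum_indicator_range, inv_mul_cancel₀ hn.ne']

lemma le_truncNormalize (hz0 : 0 ≤ z) (hz : HasSum z 1) (hn : 0 < ∑ j ∈ range n, z j) {j : ℕ}
    (hj : j < n) : z j ≤ truncNormalize z n j := by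
  have hs1 : ∑ j ∈ range n, z j ≤ 1 := sum_le_hasSum _ (fun j _ => hz0 j) hz
  simp only [truncNormalize, Pi.smul_apply, smul_eq_mul, Set.indicator_of_mem
    (mem_coe.2 (mem_range.2 hj))]
  exact le_mul_of_one_le_left (hz0 j) (one_le_inv₀ hn |>.2 hs1)

lemma truncNormalize_one_le {j : ℕ} : truncNormalize 1 n j ≤ (n : ℝ)⁻¹ := by
  by_cases hj : j < n <;> simp [truncNormalize, hj]

lemma mem_product_of_tensor_truncNormalize_ne_zero {y : ℕ → ℝ} (hy : (Function.support y).Finite)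
    (p : ℕ × ℕ) (hp : tensor y (truncNormalize z n) p ≠ 0) : p ∈ hy.toFinset ×ˢ range n := by
  rw [tensor_ne_zero] at hp
  exact mem_product.2 ⟨hy.mem_toFinset.2 hp.1,
    mem_range.2 (lt_of_not_ge fun h => hp.2 (truncNormalize_of_le h))⟩

lemma HasSum.exists_sum_range_inv_le (hz : HasSum z 1) (hz0 : 0 ≤ z) {j₀ : ℕ} (hj₀ : 0 < z j₀)
    {η : ℝ} (hη : 0 < η) :
    ∃ n, j₀ < n ∧ 0 < ∑ j ∈ range n, z j ∧ (∑ j ∈ range n, z j)⁻¹ ≤ 1 + η := by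
  have hlim : Tendsto (fun n => (∑ j ∈ range n, z j)⁻¹) atTop (𝓝 1) := by
    simpa using hz.tendsto_sum_nat.inv₀ one_ne_zero
  obtain ⟨n, hjn, hn⟩ := ((eventually_gt_atTop j₀).and
    (hlim.eventually (eventually_le_nhds (lt_add_of_pos_right 1 hη)))).exists
  exact ⟨n, hjn, hj₀.trans_le (single_le_sum (fun j _ => hz0 j) (mem_range.2 hjn)), hn⟩

lemma Submaj.kMaxSum_tensor_truncNormalize_le {x y : ℕ → ℝ}
    (hxz : Submaj (tensor x z) (tensor y z)) (hx : IsFinProbVec x) (hy : IsFinProbVec y)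
    (hz0 : 0 ≤ z) (hz : HasSum z 1) (hn : 0 < ∑ j ∈ range n, z j) (k : ℕ) :
    kMaxSum (tensor x (truncNormalize z n)) k ≤
      kMaxSum (tensor y (truncNormalize z n)) k + ((∑ j ∈ range n, z j)⁻¹ - 1) := by
  have hw0 : 0 ≤ (↑(range n) : Set ℕ).indicator z := Set.indicator_nonneg fun j _ => hz0 j
  have hwz : (↑(range n) : Set ℕ).indicator z ≤ z := Set.indicator_le_self' fun j _ => hz0 j
  have h := hxz.kMaxSum_tensor_smul_le hx.1 hx.summable hy.1 hy.summable hw0 hwz hz.summable hn k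
  rwa [hy.2.2, one_mul, tsum_congr fun j => Pi.sub_apply z _ j,
    hz.summable.tsum_sub (hz.summable.of_nonneg_of_le hw0 hwz), hz.tsum_eq, tsum_indicator_range,
    mul_sub, mul_one, inv_mul_cancel₀ hn.ne'] at h

end TruncNormalize

lemma IsFinProbVec.majT_tensor_convexComb {x y u z : ℕ → ℝ} (hx : IsFinProbVec x)
    (hy : IsFinProbVec y) (hu : IsFinProbVec u) (hz : IsFinProbVec z) {S : Finset (ℕ × ℕ)}
    (hS : ∀ p, tensor y z p ≠ 0 → p ∈ S) {c m β : ℝ} {i₀ j₀ : ℕ} (hc0 : 0 ≤ c) (hc1 : c ≤ 1)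
    (hm : m ≤ y i₀ * z j₀) (hβ : ∀ i, u i ≤ β) (hSβ : #S * β ≤ m / 2)
    (hxy : ∀ k, kMaxSum (tensor x z) k ≤ kMaxSum (tensor y z) k + c * m / 2) :
    MajT (tensor ((1 - c) • x + c • u) z) (tensor y z) := by
  refine ⟨((hx.convexComb hu hc0 hc1).tsum_tensor hz).trans (hy.tsum_tensor hz).symm, ?_⟩
  rw [tensor_add_left, tensor_smul_left, tensor_smul_left]
  exact submaj_convexComb_of_kMaxSum_le_add (i₀ := (i₀, j₀))
    (tensor_nonneg hx.1 hz.1) (summable_tensor hx.1 hz.1 hx.summable hz.summable)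
    (tensor_nonneg hy.1 hz.1) (summable_tensor hy.1 hz.1 hy.summable hz.summable)
    (tensor_nonneg hu.1 hz.1) (summable_tensor hu.1 hz.1 hu.summable hz.summable)
    ((hx.tsum_tensor hz).trans (hy.tsum_tensor hz).symm).le
    ((hu.tsum_tensor hz).trans (hy.tsum_tensor hz).symm).le
    hS hc0 hc1 hm (fun p => (mul_le_of_le_one_right (hu.1 _) (hz.le_one _)).trans (hβ _)) hSβ hxy

theorem infinite_catalysis_in_closure_general (x y : ℕ → ℝ)
    (hx : IsFinProbVec x) (hy : IsFinProbVec y)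
    (z : ℕ → ℝ) (hz0 : ∀ i, 0 ≤ z i) (hz1 : ∑' i, z i = 1)
    (hmaj : MajT (tensor x z) (tensor y z)) :
    ∀ ε : ℝ, 0 < ε → ∃ x' : ℕ → ℝ, IsFinProbVec x' ∧ (∑' i, |x i - x' i|) ≤ ε ∧
      ∃ z' : ℕ → ℝ, IsFinProbVec z' ∧ MajT (tensor x' z') (tensor y z') := by
  intro ε hε
  have hz : HasSum z 1 := (summable_of_tsum_ne_zero (hz1 ▸ one_ne_zero)).hasSum_iff.2 hz1
  obtain ⟨i₀, hi₀⟩ := hy.exists_pos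
  obtain ⟨j₀, hj₀⟩ := exists_pos_of_tsum_pos hz0 (hz1 ▸ one_pos)
  set c := min (ε / 2) 1
  set m := y i₀ * z j₀
  have hc : 0 < c := lt_min (half_pos hε) one_pos
  have hm : 0 < m := mul_pos hi₀ hj₀
  obtain ⟨n, hjn, hn, hn_inv⟩ := hz.exists_sum_range_inv_le hz0 hj₀ (by positivity : 0 < c * m / 2)
  obtain ⟨N, hN0, hN⟩ := exists_nat_pos_mul_inv_le #(hy.2.1.toFinset ×ˢ range n) (half_pos hm)
  have hu : IsFinProbVec (truncNormalize 1 N) :=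
    isFinProbVec_truncNormalize (fun _ => zero_le_one) (by simpa using hN0)
  have hz' : IsFinProbVec (truncNormalize z n) := isFinProbVec_truncNormalize hz0 hn
  refine ⟨(1 - c) • x + c • truncNormalize 1 N, hx.convexComb hu hc.le (min_le_right _ _),
    (hx.tsum_abs_sub_convexComb_le hu hc.le).trans (by linarith [min_le_left (ε / 2) 1]),
    truncNormalize z n, hz', ?_⟩
  exact hx.majT_tensor_convexComb hy hu hz' (mem_product_of_tensor_truncNormalize_ne_zero hy.2.1)
    hc.le (min_le_right _ _) (mul_le_mul_of_nonneg_left (le_truncNormalize hz0 hz hn hjn) (hy.1 i₀))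
    (fun _ => truncNormalize_one_le) hN
    fun k => (hmaj.2.kMaxSum_tensor_truncNormalize_le hx hy hz0 hz hn k).trans (by linarith)

/-- If `x` is trumped by `y` using a possibly infinite-dimensional catalyst
`z ∈ ℓ¹`, then `x` lies in the ℓ¹-closure of the set of finitely supported
probability vectors trumped by `y` with a finitely supported catalyst. -/
theorem infinite_catalysis_in_closure (x y : ℕ → ℝ)
    (hx : IsFinProbVec x) (hy : IsFinProbVec y)
    (z : ℕ → ℝ) (hz0 : ∀ i, 0 ≤ z i) (hzsum : Summable z) (hz1 : ∑' i, z i = 1)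
    (hmaj : MajT (tensor x z) (tensor y z)) :
    ∀ ε : ℝ, 0 < ε → ∃ x' : ℕ → ℝ, IsFinProbVec x' ∧ (∑' i, |x i - x' i|) ≤ ε ∧
      ∃ z' : ℕ → ℝ, IsFinProbVec z' ∧ MajT (tensor x' z') (tensor y z') :=
  infinite_catalysis_in_closure_general x y hx hy z hz0 hz1 hmaj
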